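/- Let p1, q2 : ℝ → ℝ be smooth and nonvanishing, let k0 be a real constant, let k1, r10, r20 be nonzero real constants, and suppose F(t) = k0 ∫₀ᵗ p1(s) ds + k1 is nonvanishing. Define q1 = p1/F, r1 = r10/F², p2 = −r10 p1/F², r2 = (r20/F³)(p1/q2) (the Table 2 coefficient family). Then these coefficients satisfy all the determining constraints of the Virasoro-invariant (integrable) case: (i) p2 + p1 r1 = 0; (ii) p1'/p1 − p2'/p2 + r1'/r1 = 0; (iii) q1'/q1 − q2'/q2 + r1'/r1 − r2'/r2 = 0; (iv) p1'/p1 − q1'/q1 + r1'/(2r1) = 0; and (v) 2 r1 p1' r1' + 3 p1 (r1')² − 2 p1 r1 r1'' = 0. -/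

import Mathlib

/-!
Up to constant factors every coefficient is a product of integer powers of `p1`, `q2` and `F`,
so its logarithmic derivative `L f = f' / f` is the matching integer combination:
`L q1 = L p1 - L F`, `L r1 = -2 L F`, `L p2 = L p1 - 2 L F`, `L r2 = L p1 - 3 L F - L q2`.
Constraints (ii)–(iv) are linear identities among these and hold for any nonvanishing
differentiable `F`. Only (v) sees the choice of `F`: for `r1 = c / F²` it reduces to
`p1 F'' = p1' F'`, which holds because `F' = k0 p1`.
-/

section LogDeriv

variable {𝕜 𝕜' : Type*} [NontriviallyNormedField 𝕜] [NontriviallyNormedField 𝕜']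
  [NormedAlgebra 𝕜 𝕜'] {f g : 𝕜 → 𝕜'} {x : 𝕜}

theorem logDeriv_const_div_pow {c : 𝕜'} (hc : c ≠ 0) (hf : DifferentiableAt 𝕜 f x)
    (hfx : f x ≠ 0) (n : ℕ) :
    logDeriv (fun z => c / f z ^ n) x = -n * logDeriv f x := by
  rw [logDeriv_div (f := fun _ => c) (g := fun z => f z ^ n) x hc (pow_ne_zero n hfx)
    (differentiableAt_const c) (hf.pow n), logDeriv_fun_pow hf, logDeriv_const]
  simp

theorem logDeriv_const_mul_div_pow {c : 𝕜'} (hc : c ≠ 0) (hf : DifferentiableAt 𝕜 f x)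
    (hg : DifferentiableAt 𝕜 g x) (hfx : f x ≠ 0) (hgx : g x ≠ 0) (n : ℕ) :
    logDeriv (fun z => c * f z / g z ^ n) x = logDeriv f x - n * logDeriv g x := by
  rw [logDeriv_div (f := fun z => c * f z) (g := fun z => g z ^ n) x (mul_ne_zero hc hfx)
    (pow_ne_zero n hgx) (hf.const_mul c) (hg.pow n), logDeriv_const_mul x c hc,
    logDeriv_fun_pow hg]

theorem logDeriv_const_div_pow_mul_div {h : 𝕜 → 𝕜'} {c : 𝕜'} (hc : c ≠ 0)
    (hf : DifferentiableAt 𝕜 f x) (hg : DifferentiableAt 𝕜 g x) (hh : DifferentiableAt 𝕜 h x)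
    (hfx : f x ≠ 0) (hgx : g x ≠ 0) (hhx : h x ≠ 0) (n : ℕ) :
    logDeriv (fun z => c / g z ^ n * (f z / h z)) x
      = -n * logDeriv g x + (logDeriv f x - logDeriv h x) := by
  rw [logDeriv_mul (f := fun z => c / g z ^ n) (g := fun z => f z / h z) x
      (div_ne_zero hc (pow_ne_zero n hgx)) (div_ne_zero hfx hhx)
      ((differentiableAt_const c).div (hg.pow n) (pow_ne_zero n hgx)) (hf.div hh hhx),
    logDeriv_const_div_pow hc hg hgx, logDeriv_div x hfx hhx hf hh]

end LogDeriv

theorem hasDerivAt_const_div_sq {F : ℝ → ℝ} {F' t : ℝ} (c : ℝ) (hF : HasDerivAt F F' t)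
    (hFt : F t ≠ 0) :
    HasDerivAt (fun u => c / F u ^ 2) (-2 * c * F' / F t ^ 3) t := by
  refine ((hasDerivAt_const t c).fun_div (hF.fun_pow 2) (pow_ne_zero 2 hFt)).congr_deriv ?_
  field_simp
  ring

theorem second_order_constraint_of_eq_const_div_sq {p F r : ℝ → ℝ} {k c : ℝ}
    (hp : Differentiable ℝ p) (hF : ∀ t, HasDerivAt F (k * p t) t) (hFne : ∀ t, F t ≠ 0)
    (hr : ∀ t, r t = c / F t ^ 2) (t : ℝ) :
    2 * r t * deriv p t * deriv r t + 3 * p t * deriv r t ^ 2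
      - 2 * p t * r t * deriv (deriv r) t = 0 := by
  obtain rfl : r = fun u => c / F u ^ 2 := funext hr
  have hr' : deriv (fun u => c / F u ^ 2) = fun u => -2 * c * (k * p u) / F u ^ 3 :=
    funext fun u => (hasDerivAt_const_div_sq c (hF u) (hFne u)).deriv
  have hr'' : HasDerivAt (fun u => -2 * c * (k * p u) / F u ^ 3)
      ((-2 * c * (k * deriv p t) * F t ^ 3 - -2 * c * (k * p t) * (3 * F t ^ 2 * (k * p t)))
        / (F t ^ 3) ^ 2) t :=
    (((hp t).hasDerivAt.const_mul k).const_mul _).fun_div ((hF t).fun_pow 3)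
      (pow_ne_zero 3 (hFne t))
  rw [hr', hr''.deriv]
  field_simp [hFne t]
  ring

theorem table2_family_satisfies_constraints
    (p1 q2 : ℝ → ℝ)
    (hp1 : ContDiff ℝ (⊤ : ℕ∞) p1) (hq2 : ContDiff ℝ (⊤ : ℕ∞) q2)
    (hp1ne : ∀ t : ℝ, p1 t ≠ 0) (hq2ne : ∀ t : ℝ, q2 t ≠ 0)
    (k0 : ℝ) (k1 r10 r20 : ℝ) (hr10 : r10 ≠ 0) (hr20 : r20 ≠ 0)
    (F : ℝ → ℝ) (hF : ∀ t : ℝ, F t = k0 * (∫ s in (0:ℝ)..t, p1 s) + k1)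
    (hFne : ∀ t : ℝ, F t ≠ 0)
    (q1 r1 p2 r2 : ℝ → ℝ)
    (hq1 : ∀ t : ℝ, q1 t = p1 t / F t)
    (hr1 : ∀ t : ℝ, r1 t = r10 / (F t)^2)
    (hp2 : ∀ t : ℝ, p2 t = -r10 * p1 t / (F t)^2)
    (hr2 : ∀ t : ℝ, r2 t = (r20 / (F t)^3) * (p1 t / q2 t)) :
    (∀ t : ℝ, p2 t + p1 t * r1 t = 0)
    ∧ (∀ t : ℝ, deriv p1 t / p1 t - deriv p2 t / p2 t + deriv r1 t / r1 t = 0)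
    ∧ (∀ t : ℝ, deriv q1 t / q1 t - deriv q2 t / q2 t
        + deriv r1 t / r1 t - deriv r2 t / r2 t = 0)
    ∧ (∀ t : ℝ, deriv p1 t / p1 t - deriv q1 t / q1 t + deriv r1 t / (2 * r1 t) = 0)
    ∧ (∀ t : ℝ, 2 * r1 t * deriv p1 t * deriv r1 t + 3 * p1 t * (deriv r1 t)^2
        - 2 * p1 t * r1 t * deriv (deriv r1) t = 0) := by
  have hp1d : Differentiable ℝ p1 := hp1.differentiable (by simp)
  have hq2d : Differentiable ℝ q2 := hq2.differentiable (by simp)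
  have hFderiv (t : ℝ) : HasDerivAt F (k0 * p1 t) t := by
    rw [funext hF]
    exact ((hp1.continuous.integral_hasStrictDerivAt 0 t).hasDerivAt.const_mul k0).add_const k1
  have hFd (t : ℝ) : DifferentiableAt ℝ F t := (hFderiv t).differentiableAt
  have lq1 (t : ℝ) : logDeriv q1 t = logDeriv p1 t - logDeriv F t := by
    rw [funext hq1]
    exact logDeriv_div t (hp1ne t) (hFne t) (hp1d t) (hFd t)
  have lr1 (t : ℝ) : logDeriv r1 t = -2 * logDeriv F t := by
    rw [funext hr1, logDeriv_const_div_pow hr10 (hFd t) (hFne t)]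
    norm_num
  have lp2 (t : ℝ) : logDeriv p2 t = logDeriv p1 t - 2 * logDeriv F t := by
    rw [funext hp2, logDeriv_const_mul_div_pow (neg_ne_zero.2 hr10) (hp1d t) (hFd t)
      (hp1ne t) (hFne t)]
    norm_num
  have lr2 (t : ℝ) : logDeriv r2 t = -3 * logDeriv F t + (logDeriv p1 t - logDeriv q2 t) := by
    rw [funext hr2, logDeriv_const_div_pow_mul_div hr20 (hp1d t) (hFd t) (hq2d t) (hp1ne t)
      (hFne t) (hq2ne t)]
    norm_num
  refine ⟨fun t => by rw [hp2, hr1]; ring, fun t => ?_, fun t => ?_, fun t => ?_,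
    second_order_constraint_of_eq_const_div_sq hp1d hFderiv hFne hr1⟩
  · simp only [← logDeriv_apply, lp2, lr1]
    ring
  · simp only [← logDeriv_apply, lq1, lr1, lr2]
    ring
  · rw [mul_comm 2 (r1 t), ← div_div]
    simp only [← logDeriv_apply, lq1, lr1]
    ring
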